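/- arXiv:math/0501313 — 5 statements merged into one kernel-verified Lean document; each statement's English description precedes it below -/
import Mathlib

section
/- For any real θ and any μ with 0 < μ < 1/4, one has ((1/2) + (1/2)cos θ)^(1/2) ≤ ((1-μ) + μ cos θ)^(1/(4μ)). -/
/-!
Put `y = (1 + cos θ) / 2 ∈ [0, 1]` and `p = 2μ`. The right-hand base is `1 - p + p y`, which by
Bernoulli's inequality dominates `y ^ p`; raising to the power `1 / (2p)` gives `y ^ (1/2)`.
-/

open Real

theorem rpow_mul_le_one_sub_add_mul_rpow {y p q : ℝ} (hy : 0 ≤ y) (hp0 : 0 ≤ p) (hp1 : p ≤ 1)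
    (hq : 0 ≤ q) : y ^ (p * q) ≤ (1 - p + p * y) ^ q := by
  have bernoulli : y ^ p ≤ 1 - p + p * y := by
    have h := rpow_one_add_le_one_add_mul_self (s := y - 1) (by linarith) hp0 hp1
    rwa [add_sub_cancel, show 1 + p * (y - 1) = 1 - p + p * y by ring] at h
  rw [rpow_mul hy]
  exact rpow_le_rpow (rpow_nonneg hy p) bernoulli hq

theorem sqrt_half_cos_le_rpow (θ μ : ℝ) (hμ0 : 0 < μ) (hμ : μ < 1 / 4) :
    (1 / 2 + (1 / 2) * Real.cos θ) ^ ((1 : ℝ) / 2) ≤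
      ((1 - μ) + μ * Real.cos θ) ^ ((1 : ℝ) / (4 * μ)) := by
  have hy : 0 ≤ 1 / 2 + (1 / 2) * cos θ := by linarith [neg_one_le_cos θ]
  have key := rpow_mul_le_one_sub_add_mul_rpow hy (p := 2 * μ) (q := 1 / (4 * μ))
    (by linarith) (by linarith) (by positivity)
  convert key using 2
  · field_simp; norm_num
  · ring
end

section
/- (Weighted Odlyzko lemma) Let 0 ≤ d ≤ n, let F be a field, and let Y = (η₁,…,ηₙ) where η₁,…,ηₙ are i.i.d. random variables taking values in {-1,0,1} ⊂ F with P(ηᵢ = 0) = 1-μ and P(ηᵢ = 1) = P(ηᵢ = -1) = μ/2, where 0 ≤ μ ≤ 1/2. Then for any d-dimensional linear subspace W of Fⁿ, P(Y ∈ W) ≤ (1-μ)^(n-d). -/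
/-!
Restricted to `W`, the coordinate functionals span the dual space `W*`, so `d` of them form a basis
of it: there is a set `S` of `d` coordinates such that a vector of `W` is determined by its
coordinates in `S`. Conditioning on the entries of `Y` indexed by `S`, the event `Y ∈ W` prescribes
the value of each of the `n - d` remaining independent entries, and each entry takes a prescribed
value with probability at most `1 - μ`.
-/

/-- The value in `{-1,0,1} ⊂ F` encoded by an element of `Fin 3`. -/
def triVal (F : Type*) [Field F] : Fin 3 → F := ![-1, 0, 1]

/-- The probability weight of an element of `Fin 3` under the lazy sign distribution:
`0` has probability `1-μ` and `±1` have probability `μ/2` each. -/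
noncomputable def triWeight (μ : ℝ) : Fin 3 → ℝ := ![μ / 2, 1 - μ, μ / 2]

open Module Finset

namespace Submodule

variable {K ι : Type*} [Field K]

def coordFunctional (W : Submodule K (ι → K)) (i : ι) : Dual K W :=
  (LinearMap.proj i).comp W.subtype

@[simp]
theorem coordFunctional_apply (W : Submodule K (ι → K)) (i : ι) (w : W) :
    W.coordFunctional i w = (w : ι → K) i :=
  rfl

theorem span_range_coordFunctional [Finite ι] (W : Submodule K (ι → K)) :
    span K (Set.range W.coordFunctional) = ⊤ := by
  rw [← Subspace.dualCoannihilator_dualAnnihilator_eq (W := span K _), dualAnnihilator_eq_top_iff,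
    ← SetLike.coe_set_eq, coe_dualCoannihilator_span]
  ext w
  simp only [Set.forall_mem_range, coordFunctional_apply, Set.mem_ofPred_eq, SetLike.mem_coe,
    mem_bot]
  exact ⟨fun h => Subtype.ext (funext h), fun h i => by simp [h]⟩

theorem exists_card_eq_finrank_injOn_restrict [Fintype ι] (W : Submodule K (ι → K)) :
    ∃ S : Finset ι, S.card = finrank K W ∧ Set.InjOn S.restrict (W : Set (ι → K)) := by
  obtain ⟨κ, a, ha, hspan, hli⟩ := exists_linearIndependent' K W.coordFunctional
  rw [W.span_range_coordFunctional] at hspan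
  have := hli.finite
  have := Fintype.ofFinite κ
  refine ⟨univ.map ⟨a, ha⟩, ?_, fun v hv w hw hvw => ?_⟩
  · rw [card_map, card_univ, ← finrank_span_eq_card hli, hspan, finrank_top,
      Subspace.dual_finrank_eq]
  · have hmem : (⟨v, hv⟩ - ⟨w, hw⟩ : W) ∈
        (span K (Set.range (W.coordFunctional ∘ a))).dualCoannihilator := by
      rw [← SetLike.mem_coe, coe_dualCoannihilator_span]
      rintro _ ⟨k, rfl⟩
      simpa [sub_eq_zero] using congrFun hvw ⟨a k, by simp⟩
    rw [hspan, dualCoannihilator_top, mem_bot, sub_eq_zero] at hmem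
    exact congrArg Subtype.val hmem

end Submodule

section ProductWeight

variable {α β : Type*} [Fintype α] [DecidableEq β] {p : α → ℝ} {g : α → β} {q : ℝ}

theorem sum_ite_comp_eq_prod_le_pow {T : Type*} [Fintype T] [DecidableEq T]
    (hp : ∀ a, 0 ≤ p a) (hfiber : ∀ c, ∑ a, (if g a = c then p a else 0) ≤ q) (c : T → β) :
    ∑ t : T → α, (if ∀ j, g (t j) = c j then ∏ j, p (t j) else 0) ≤ q ^ Fintype.card T :=
  calc ∑ t : T → α, (if ∀ j, g (t j) = c j then ∏ j, p (t j) else 0)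
      = ∏ j, ∑ a, (if g a = c j then p a else 0) := by
        rw [Fintype.prod_sum]
        simp only [Fintype.prod_ite_zero]
    _ ≤ ∏ _j : T, q :=
        prod_le_prod (fun _ _ => sum_nonneg fun a _ => ite_nonneg (hp a) le_rfl)
          fun j _ => hfiber (c j)
    _ = q ^ Fintype.card T := by rw [prod_const, card_univ]

theorem sum_ite_prod_le_pow_of_comp_eq {T : Type*} [Fintype T] [DecidableEq T]
    {P : (T → α) → Prop} [DecidablePred P] (hP : ∀ t t', P t → P t' → g ∘ t = g ∘ t')
    (hp : ∀ a, 0 ≤ p a) (hq : 0 ≤ q) (hfiber : ∀ c, ∑ a, (if g a = c then p a else 0) ≤ q) :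
    ∑ t, (if P t then ∏ j, p (t j) else 0) ≤ q ^ Fintype.card T := by
  by_cases hex : ∃ t₀, P t₀
  · obtain ⟨t₀, ht₀⟩ := hex
    calc ∑ t, (if P t then ∏ j, p (t j) else 0)
        ≤ ∑ t : T → α, (if ∀ j, g (t j) = g (t₀ j) then ∏ j, p (t j) else 0) := by
          refine sum_le_sum fun t _ => ?_
          by_cases ht : P t
          · rw [if_pos ht, if_pos (congrFun (hP t t₀ ht ht₀) : ∀ j, g (t j) = g (t₀ j))]
          · exact (if_neg ht).trans_le (ite_nonneg (prod_nonneg fun j _ => hp _) le_rfl)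
      _ ≤ q ^ Fintype.card T := sum_ite_comp_eq_prod_le_pow hp hfiber _
  · simp only [not_exists.mp hex, if_false, sum_const_zero]
    positivity

theorem sum_ite_mem_prod_le_pow_of_injOn_restrict {ι : Type*} [Fintype ι] [DecidableEq ι]
    {A : Set (ι → β)} [DecidablePred (· ∈ A)] {S : Finset ι} (hS : Set.InjOn S.restrict A)
    (hp : ∀ a, 0 ≤ p a) (hp1 : ∑ a, p a = 1) (hq : 0 ≤ q)
    (hfiber : ∀ c, ∑ a, (if g a = c then p a else 0) ≤ q) :
    ∑ s : ι → α, (if (fun i => g (s i)) ∈ A then ∏ i, p (s i) else 0) ≤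
      q ^ (Fintype.card ι - S.card) := by
  set e := (Equiv.piEquivPiSubtypeProd (· ∈ S) fun _ => α).symm
  have he_mem (x) (i : {i // i ∈ S}) : e x i = x.1 i := by simp [e, i.2]
  have he_notMem (x) (j : {i // i ∉ S}) : e x j = x.2 j := by simp [e, j.2]
  have hsplit (x) : ∏ i, p (e x i) = (∏ i, p (x.1 i)) * ∏ j, p (x.2 j) := by
    simp only [← Fintype.prod_subtype_mul_prod_subtype (· ∈ S), he_mem, he_notMem]
    congr! -- the two products over `S` carry different `Fintype` instances
  have hdet (a) (b b' : {i // i ∉ S} → α) (hb : (fun i => g (e (a, b) i)) ∈ A)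
      (hb' : (fun i => g (e (a, b') i)) ∈ A) : g ∘ b = g ∘ b' := by
    have := hS hb hb' (funext fun i => by simp [Finset.restrict, he_mem (_, _) i])
    exact funext fun j => by simpa [he_notMem] using congrFun this j
  have hcard : Fintype.card {i // i ∉ S} = Fintype.card ι - S.card := by
    rw [Fintype.card_subtype_compl, Fintype.card_coe]
  calc ∑ s : ι → α, (if (fun i => g (s i)) ∈ A then ∏ i, p (s i) else 0)
      = ∑ a, (∏ i, p (a i)) *
          ∑ b, (if (fun i => g (e (a, b) i)) ∈ A then ∏ j, p (b j) else 0) := by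
        rw [← e.sum_comp, Fintype.sum_prod_type]
        simp only [hsplit, mul_sum, mul_ite, mul_zero]
    _ ≤ ∑ a : {i // i ∈ S} → α, (∏ i, p (a i)) * q ^ Fintype.card {i // i ∉ S} := by
        gcongr with a
        · exact prod_nonneg fun i _ => hp _
        · exact sum_ite_prod_le_pow_of_comp_eq (hdet a) hp hq hfiber
    _ = q ^ (Fintype.card ι - S.card) := by
        rw [← sum_mul, ← Fintype.prod_sum fun _ => p, hp1, prod_const_one, one_mul, hcard]

end ProductWeight

theorem triWeight_nonneg {μ : ℝ} (hμ0 : 0 ≤ μ) (hμ1 : μ ≤ 1) (a : Fin 3) : 0 ≤ triWeight μ a := by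
  fin_cases a <;> simp [triWeight] <;> linarith

theorem sum_triWeight (μ : ℝ) : ∑ a, triWeight μ a = 1 := by
  simp [triWeight, Fin.sum_univ_three]
  ring

-- In characteristic 2 the values `±1` coincide and the fibre of `1` has mass `μ ≤ 1 - μ`.
theorem sum_ite_triVal_eq_le (F : Type*) [Field F] [DecidableEq F] {μ : ℝ} (hμ : μ ≤ 1 / 2)
    (c : F) : ∑ a, (if triVal F a = c then triWeight μ a else 0) ≤ 1 - μ := by
  rw [Fin.sum_univ_three, show triVal F 0 = -1 from rfl, show triVal F 1 = 0 from rfl,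
    show triVal F 2 = 1 from rfl]
  simp only [triWeight, Matrix.cons_val]
  rcases eq_or_ne c 0 with rfl | hc
  · simp
  · rw [if_neg hc.symm]
    split_ifs <;> linarith

open scoped Classical in
theorem weighted_odlyzko_general (F : Type*) [Field F] (n d : ℕ)
    (μ : ℝ) (hμ0 : 0 ≤ μ) (hμ : μ ≤ 1 / 2)
    (W : Submodule F (Fin n → F)) (hW : Module.finrank F W = d) :
    ∑ s : Fin n → Fin 3,
        (if (fun i => triVal F (s i)) ∈ W then ∏ i, triWeight μ (s i) else 0) ≤
      (1 - μ) ^ (n - d) := by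
  obtain ⟨S, hcard, hinj⟩ := W.exists_card_eq_finrank_injOn_restrict
  have h := sum_ite_mem_prod_le_pow_of_injOn_restrict hinj (triWeight_nonneg hμ0 (by linarith))
    (sum_triWeight μ) (by linarith) (sum_ite_triVal_eq_le F hμ)
  rwa [Fintype.card_fin, hcard, hW] at h

open scoped Classical in
/-- Weighted Odlyzko lemma: if `Y = (η₁,…,ηₙ)` with `ηᵢ` i.i.d. taking value `0` with
probability `1-μ` and `±1` with probability `μ/2` each, and `W` is a `d`-dimensional
subspace of `Fⁿ`, then `P(Y ∈ W) ≤ (1-μ)^(n-d)`. -/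
theorem weighted_odlyzko (F : Type*) [Field F] (n d : ℕ) (hdn : d ≤ n)
    (μ : ℝ) (hμ0 : 0 ≤ μ) (hμ : μ ≤ 1 / 2)
    (W : Submodule F (Fin n → F)) (hW : Module.finrank F W = d) :
    ∑ s : Fin n → Fin 3,
        (if (fun i => triVal F (s i)) ∈ W then ∏ i, triWeight μ (s i) else 0) ≤
      (1 - μ) ^ (n - d) :=
  weighted_odlyzko_general F n d μ hμ0 hμ W hW
end

section
/- (Sum set estimate via Ruzsa covering) Let A be a finite symmetric non-empty subset of an abelian group G with |4A| ≤ C|A| for some C ≥ 1. Then for every integer k ≥ 4, |kA| ≤ binom(⌊C⌋+k-3, k-2) · C · |A|. -/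
open scoped Pointwise

/-- The `k`-fold iterated sumset `kA = {a₁ + ⋯ + a_k : aᵢ ∈ A}` of a finite set in an
abelian group (with `0A = {0}`). -/
def iterSumset {G : Type*} [AddCommGroup G] [DecidableEq G] (A : Finset G) : ℕ → Finset G
  | 0 => {0}
  | k + 1 => iterSumset A k + A

/-!
Ruzsa's covering lemma applied to `3A + A = 4A` gives `F ⊆ 3A` with `|F| ≤ C` and
`3A ⊆ F + (A - A) = F + 2A`, the last equality by symmetry of `A`. Adding `A` repeatedly
then yields `(n + 2)A ⊆ nF + 2A`, and an `n`-fold sumset of `F` has at most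
`binom(|F| + n - 1, n)` elements, one for each multiset of size `n` drawn from `F`.
-/

open Finset

lemma iterSumset_eq_nsmul {G : Type*} [AddCommGroup G] [DecidableEq G] (A : Finset G) :
    ∀ k, iterSumset A k = k • A
  | 0 => (zero_nsmul A).symm
  | k + 1 => by rw [iterSumset, iterSumset_eq_nsmul A k, succ_nsmul]

namespace Finset

variable {α : Type*} [DecidableEq α]

lemma card_nsmul_le_choose [AddCommMonoid α] (s : Finset α) (n : ℕ) :
    #(n • s) ≤ (#s + n - 1).choose n := by
  have hsub : n • s ⊆ univ.image fun m : Sym s n ↦ ((m : Multiset s).map (↑)).sum := by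
    intro x hx
    obtain ⟨f, rfl⟩ := mem_nsmul.1 hx
    exact mem_image.2 ⟨⟨List.ofFn f, by simp⟩, mem_univ _, by simp [List.map_ofFn, Function.comp_def]⟩
  calc #(n • s) ≤ Fintype.card (Sym s n) := (card_le_card hsub).trans card_image_le
    _ = (#s + n - 1).choose n := by rw [Sym.card_sym_eq_choose, Fintype.card_coe]

lemma add_nsmul_subset_nsmul_add_of_add_subset [AddCommMonoid α] {A B F : Finset α}
    (h : B + A ⊆ F + B) : ∀ n : ℕ, B + n • A ⊆ n • F + B
  | 0 => by simp
  | n + 1 => calc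
      B + (n + 1) • A = (B + n • A) + A := by rw [succ_nsmul, add_assoc]
      _ ⊆ (n • F + B) + A := add_subset_add_right (add_nsmul_subset_nsmul_add_of_add_subset h n)
      _ = n • F + (B + A) := add_assoc _ _ _
      _ ⊆ n • F + (F + B) := add_subset_add_left h
      _ = (n + 1) • F + B := by rw [succ_nsmul, add_assoc]

variable [AddCommGroup α] {A : Finset α} {K : ℝ}

lemma exists_card_le_nsmul_add_two_subset (hA : A.Nonempty) (hsym : -A = A)
    (hK : #(4 • A) ≤ K * #A) : ∃ F : Finset α, #F ≤ K ∧ ∀ n, (n + 2) • A ⊆ n • F + 2 • A := by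
  obtain ⟨F, -, hFcard, hcover⟩ := ruzsa_covering_add (A := 3 • A) hA (by rwa [← succ_nsmul])
  have hAA : A - A = 2 • A := by rw [sub_eq_add_neg, hsym, two_nsmul]
  refine ⟨F, hFcard, fun n ↦ ?_⟩
  have h3 : 2 • A + A ⊆ F + 2 • A := by rw [← succ_nsmul, ← hAA]; exact hcover
  rw [add_comm, add_nsmul]
  exact add_nsmul_subset_nsmul_add_of_add_subset h3 n

lemma card_nsmul_add_two_le (hA : A.Nonempty) (hsym : -A = A) (hK : #(4 • A) ≤ K * #A)
    (n : ℕ) : #((n + 2) • A) ≤ ((⌊K⌋₊ + n - 1).choose n : ℝ) * K * #A := by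
  obtain ⟨F, hFcard, hcover⟩ := exists_card_le_nsmul_add_two_subset hA hsym hK
  have hF : (#F + n - 1).choose n ≤ (⌊K⌋₊ + n - 1).choose n :=
    Nat.choose_le_choose _ (by have := Nat.le_floor hFcard; omega)
  have h2 : (#(2 • A) : ℝ) ≤ K * #A := by
    refine le_trans ?_ hK
    rw [show 4 • A = 2 • A + 2 • A by rw [← add_nsmul]]
    exact_mod_cast card_le_card_add_left hA.nsmul
  calc (#((n + 2) • A) : ℝ) ≤ #(n • F) * #(2 • A) := by
        exact_mod_cast (card_le_card (hcover n)).trans card_add_le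
    _ ≤ (⌊K⌋₊ + n - 1).choose n * (K * #A) := by
        gcongr
        exact_mod_cast (card_nsmul_le_choose F n).trans hF
    _ = _ := (mul_assoc _ _ _).symm

end Finset

theorem iter_sumset_growth_general {G : Type*} [AddCommGroup G] [DecidableEq G]
    (A : Finset G) (hA : A.Nonempty) (hsym : -A = A) (C : ℝ)
    (h4 : ((iterSumset A 4).card : ℝ) ≤ C * A.card) :
    ∀ k : ℕ, 4 ≤ k →
      ((iterSumset A k).card : ℝ) ≤ (Nat.choose (⌊C⌋₊ + k - 3) (k - 2)) * C * A.card := by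
  intro k hk
  obtain ⟨n, rfl⟩ := Nat.exists_eq_add_of_le' (show 2 ≤ k by omega)
  rw [iterSumset_eq_nsmul] at h4 ⊢
  rw [show ⌊C⌋₊ + (n + 2) - 3 = ⌊C⌋₊ + n - 1 by omega, Nat.add_sub_cancel]
  exact card_nsmul_add_two_le hA hsym h4 n

/-- Sum set estimate via the Ruzsa covering argument: if `A` is symmetric, non-empty and
`|4A| ≤ C|A|`, then `|kA| ≤ binom(⌊C⌋+k-3, k-2)·C·|A|` for every `k ≥ 4`. -/
theorem iter_sumset_growth {G : Type*} [AddCommGroup G] [DecidableEq G]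
    (A : Finset G) (hA : A.Nonempty) (hsym : -A = A) (C : ℝ) (hC : 1 ≤ C)
    (h4 : ((iterSumset A 4).card : ℝ) ≤ C * A.card) :
    ∀ k : ℕ, 4 ≤ k →
      ((iterSumset A k).card : ℝ) ≤ (Nat.choose (⌊C⌋₊ + k - 3) (k - 2)) * C * A.card :=
  iter_sumset_growth_general A hA hsym C h4
end

section
/- Let Λ be a non-empty finite subset of F = ℤ/pℤ and h(x) := (1/|Λ|) Σ_{ξ∈Λ} e_p(xξ). With ‖x‖_Λ defined as ( (1/|Λ|²) Σ_{ξ,ξ'∈Λ} ‖x(ξ-ξ')/p‖² )^{1/2}, one has 1 - 100‖x‖_Λ² ≤ |h(x)|² ≤ 1 - (1/100)‖x‖_Λ² for all x ∈ F. -/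
/-!
Expanding the square, `|h(x)|²` is the average over `(ξ, ξ') ∈ Λ²` of `cos (2π x(ξ - ξ')/p)`,
so both bounds follow by averaging the pointwise inequalities
`1 - 2π²‖t‖² ≤ cos (2πt) ≤ 1 - 8‖t‖²`; the lower one is `1 - u²/2 ≤ cos u`, the upper one
is `cos 2u = 1 - 2 sin² u` together with Jordan's inequality.
-/

open Real Complex

/-- The Λ-norm `‖x‖_Λ = ((1/|Λ|²) Σ_{ξ,ξ'∈Λ} ‖x(ξ-ξ')/p‖²)^{1/2}`, where `‖t‖` on
`UnitAddCircle` is the distance of the real number `t` to the nearest integer. -/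
noncomputable def lambdaNorm (p : ℕ) (Λ : Finset (ZMod p)) (x : ZMod p) : ℝ :=
  Real.sqrt ((1 / (Λ.card : ℝ) ^ 2) *
    ∑ ξ ∈ Λ, ∑ ξ' ∈ Λ, ‖((((x * (ξ - ξ')).val : ℝ) / p : ℝ) : UnitAddCircle)‖ ^ 2)

open Finset ComplexConjugate

lemma cos_two_pi_mul_eq_cos_norm (t : ℝ) :
    Real.cos (2 * π * t) = Real.cos (2 * π * ‖(t : UnitAddCircle)‖) := by
  rw [UnitAddCircle.norm_eq, ← abs_of_pos two_pi_pos, ← abs_mul, Real.cos_abs,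
    abs_of_pos two_pi_pos, mul_sub, mul_comm _ (round t : ℝ), Real.cos_sub_int_mul_two_pi]

lemma one_sub_two_pi_sq_mul_norm_sq_le_cos (t : ℝ) :
    1 - 2 * π ^ 2 * ‖(t : UnitAddCircle)‖ ^ 2 ≤ Real.cos (2 * π * t) := by
  rw [cos_two_pi_mul_eq_cos_norm]
  linarith [one_sub_sq_div_two_le_cos (x := 2 * π * ‖(t : UnitAddCircle)‖)]

lemma cos_le_one_sub_eight_mul_norm_sq (t : ℝ) :
    Real.cos (2 * π * t) ≤ 1 - 8 * ‖(t : UnitAddCircle)‖ ^ 2 := by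
  rw [cos_two_pi_mul_eq_cos_norm, mul_assoc, Real.cos_two_mul, Real.cos_sq']
  set s := ‖(t : UnitAddCircle)‖
  have hs : s ≤ 1 / 2 := by simpa [s, UnitAddCircle.norm_eq] using abs_sub_round t
  have hsin : 2 * s ≤ Real.sin (π * s) := by
    have := mul_le_sin (x := π * s) (by positivity) (by nlinarith [pi_pos])
    rwa [← mul_assoc, div_mul_cancel₀ _ pi_ne_zero] at this
  nlinarith [norm_nonneg (t : UnitAddCircle)]

lemma Complex.sq_norm_sum_eq_sum_sum_re_mul_conj {ι : Type*} (s : Finset ι) (z : ι → ℂ) :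
    ‖∑ i ∈ s, z i‖ ^ 2 = ∑ i ∈ s, ∑ j ∈ s, (z i * conj (z j)).re := by
  rw [Complex.sq_norm, ← ofReal_re (normSq _), ← mul_conj, map_sum, sum_mul_sum, re_sum]
  simp_rw [re_sum]

namespace ZMod

variable {N : ℕ} [NeZero N]

lemma re_toCircle (j : ZMod N) : (toCircle j : ℂ).re = Real.cos (2 * π * (j.val / N)) := by
  rw [toCircle_eq_circleExp, Circle.coe_exp, exp_ofReal_mul_I_re]

lemma toCircle_mul_conj (a b : ZMod N) :
    (toCircle a : ℂ) * conj (toCircle b : ℂ) = toCircle (a - b) := by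
  rw [AddChar.map_sub_eq_div, div_eq_mul_inv, Circle.coe_mul, Circle.coe_inv_eq_conj]

lemma sq_norm_average_toCircle {ι : Type*} (s : Finset ι) (f : ι → ZMod N) :
    ‖(1 / (#s : ℂ)) * ∑ i ∈ s, (toCircle (f i) : ℂ)‖ ^ 2 =
      1 / (#s : ℝ) ^ 2 * ∑ i ∈ s, ∑ j ∈ s, Real.cos (2 * π * ((f i - f j).val / N)) := by
  rw [norm_mul, mul_pow, Complex.sq_norm_sum_eq_sum_sum_re_mul_conj]
  simp only [toCircle_mul_conj, re_toCircle, norm_div, norm_one, Complex.norm_natCast, div_pow,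
    one_pow]

end ZMod

lemma Finset.one_div_card_sq_mul_sum_sum_one_sub_mul {ι : Type*} {s : Finset ι}
    (hs : s.Nonempty) (c : ℝ) (w : ι → ι → ℝ) :
    1 / (#s : ℝ) ^ 2 * ∑ i ∈ s, ∑ j ∈ s, (1 - c * w i j) =
      1 - c * (1 / (#s : ℝ) ^ 2 * ∑ i ∈ s, ∑ j ∈ s, w i j) := by
  have : (#s : ℝ) ≠ 0 := by positivity
  simp only [sum_sub_distrib, sum_const, nsmul_eq_mul, mul_one, ← mul_sum]
  field_simp

/-- Comparison of `|h(x)|²` with the Λ-norm, where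
`h(x) = (1/|Λ|) Σ_{ξ∈Λ} e_p(xξ)`: one has
`1 - 100‖x‖_Λ² ≤ |h(x)|² ≤ 1 - (1/100)‖x‖_Λ²`. -/
theorem abs_h_sq_lambdaNorm_bounds (p : ℕ) [Fact p.Prime] (Λ : Finset (ZMod p))
    (hΛ : Λ.Nonempty) (x : ZMod p) :
    1 - 100 * lambdaNorm p Λ x ^ 2 ≤
      ‖((1 / (Λ.card : ℂ)) *
        ∑ ξ ∈ Λ, Complex.exp (2 * π * Complex.I * ((x * ξ).val : ℝ) / p))‖ ^ 2 ∧
    ‖((1 / (Λ.card : ℂ)) *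
        ∑ ξ ∈ Λ, Complex.exp (2 * π * Complex.I * ((x * ξ).val : ℝ) / p))‖ ^ 2 ≤
      1 - (1 / 100) * lambdaNorm p Λ x ^ 2 := by
  have hh : ‖(1 / (#Λ : ℂ)) * ∑ ξ ∈ Λ, exp (2 * π * I * ((x * ξ).val : ℝ) / p)‖ ^ 2 =
      1 / (#Λ : ℝ) ^ 2 * ∑ ξ ∈ Λ, ∑ ξ' ∈ Λ, Real.cos (2 * π * ((x * (ξ - ξ')).val / p)) := by
    simp_rw [ofReal_natCast, ← ZMod.toCircle_apply, mul_sub]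
    exact ZMod.sq_norm_average_toCircle Λ (x * ·)
  rw [hh, lambdaNorm, Real.sq_sqrt (by positivity)]
  constructor
  · calc _ ≤ 1 - 2 * π ^ 2 * (1 / (#Λ : ℝ) ^ 2 * ∑ ξ ∈ Λ, ∑ ξ' ∈ Λ,
            ‖((((x * (ξ - ξ')).val : ℝ) / p : ℝ) : UnitAddCircle)‖ ^ 2) := by
          gcongr
          nlinarith [pi_lt_d2, pi_pos]
      _ = _ := (one_div_card_sq_mul_sum_sum_one_sub_mul hΛ _ _).symm
      _ ≤ _ := by
          gcongr
          exact one_sub_two_pi_sq_mul_norm_sq_le_cos _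
  · calc _ ≤ 1 / (#Λ : ℝ) ^ 2 * ∑ ξ ∈ Λ, ∑ ξ' ∈ Λ,
            (1 - 8 * ‖((((x * (ξ - ξ')).val : ℝ) / p : ℝ) : UnitAddCircle)‖ ^ 2) := by
          gcongr
          exact cos_le_one_sub_eight_mul_norm_sq _
      _ = _ := one_div_card_sq_mul_sum_sum_one_sub_mul hΛ _ _
      _ ≤ _ := by gcongr; norm_num
end

section
/- (Progressions lie in proper progressions) There is an absolute constant C₀ such that: if P is a symmetric generalized arithmetic progression of rank d in an abelian group G, and every non-zero element of G has order at least d^{C₀d³}|P|, then there exists a proper symmetric generalized arithmetic progression Q of rank at most d containing P with |Q| ≤ d^{C₀d³}|P|. -/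
/-!
Induction on the rank. If `P` is not proper, two representations of one element differ by a
relation `∑ mⱼ vⱼ = 0` with `|mⱼ| ≤ 2Nⱼ`. Dividing `m` by the gcd `g` of its entries gives an
element killed by `g < |P|`, hence zero by the order hypothesis, so `m` may be taken primitive. A unimodular `V` with `V m = e₀` exists by Euclid's
algorithm, and its last `d - 1` rows form a basis of `m^⊥ ⊆ ℤ^d`. Rewriting `P` in the dual
generators puts it inside a progression of rank `d - 1` whose side lengths are `∑ⱼ Nⱼ |xⱼ|` for
the rows `x` of any basis of `m^⊥`. For a basis that is reduced for the weighted norm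
`‖x‖² = ∑ⱼ Nⱼ² xⱼ²`, the Hermite-type bound `∏ ‖xₖ‖² ≤ 4^{r²} det Gram`, the covolume
`det Gram(m^⊥) = ∑ⱼ mⱼ² ∏_{k ≠ j} N_k²` and Cauchy–Schwarz show that one step costs a factor
`d^{O(d²)}`, hence `d^{O(d³)}` over the whole induction.
-/

open Matrix

namespace ProperProgression

section WeightedForm

variable {ι : Type*} [Fintype ι] [DecidableEq ι]

def wInner (a x y : ι → ℤ) : ℤ := x ⬝ᵥ (diagonal a *ᵥ y)

def wNormSq (a x : ι → ℤ) : ℤ := wInner a x x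

def wGram {r : ℕ} (a : ι → ℤ) (B : Matrix (Fin r) ι ℤ) : Matrix (Fin r) (Fin r) ℤ :=
  B * diagonal a * Bᵀ

lemma wInner_eq_sum (a x y : ι → ℤ) : wInner a x y = ∑ j, a j * x j * y j := by
  simp only [wInner, dotProduct, mulVec_diagonal]
  exact Finset.sum_congr rfl fun j _ => by ring

lemma wInner_comm (a x y : ι → ℤ) : wInner a x y = wInner a y x := by
  simp only [wInner_eq_sum]
  exact Finset.sum_congr rfl fun j _ => by ring

@[simp] lemma wInner_add_left (a x y z : ι → ℤ) :
    wInner a (x + y) z = wInner a x z + wInner a y z := add_dotProduct _ _ _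

@[simp] lemma wInner_sub_left (a x y z : ι → ℤ) :
    wInner a (x - y) z = wInner a x z - wInner a y z := sub_dotProduct _ _ _

@[simp] lemma wInner_smul_left (a x z : ι → ℤ) (c : ℤ) :
    wInner a (c • x) z = c * wInner a x z := smul_dotProduct _ _ _

@[simp] lemma wInner_sum_smul_left {κ : Type*} [Fintype κ] (a z : ι → ℤ) (c : κ → ℤ)
    (x : κ → ι → ℤ) : wInner a (∑ k, c k • x k) z = ∑ k, c k * wInner a (x k) z := by
  simp only [wInner, sum_dotProduct, smul_dotProduct, smul_eq_mul]

lemma wNormSq_smul_sub_smul (a x b : ι → ℤ) (c t : ℤ) :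
    wNormSq a (c • x - t • b) =
      c ^ 2 * wNormSq a x - 2 * c * t * wInner a x b + t ^ 2 * wNormSq a b := by
  simp only [wNormSq, wInner_eq_sum, Finset.mul_sum, ← Finset.sum_sub_distrib,
    ← Finset.sum_add_distrib, Pi.sub_apply, Pi.smul_apply, smul_eq_mul]
  exact Finset.sum_congr rfl fun j _ => by ring

lemma wNormSq_smul (a x : ι → ℤ) (c : ℤ) : wNormSq a (c • x) = c ^ 2 * wNormSq a x := by
  simpa using wNormSq_smul_sub_smul a x 0 c 0

lemma wNormSq_nonneg {a : ι → ℤ} (ha : ∀ j, 0 < a j) (x : ι → ℤ) : 0 ≤ wNormSq a x := by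
  rw [wNormSq, wInner_eq_sum]
  exact Finset.sum_nonneg fun j _ => by nlinarith [ha j, mul_self_nonneg (x j)]

lemma wNormSq_pos {a : ι → ℤ} (ha : ∀ j, 0 < a j) {x : ι → ℤ} (hx : x ≠ 0) :
    0 < wNormSq a x := by
  obtain ⟨i, hi⟩ := Function.ne_iff.mp hx
  rw [wNormSq, wInner_eq_sum]
  refine Finset.sum_pos' (fun j _ => by nlinarith [ha j, mul_self_nonneg (x j)])
    ⟨i, Finset.mem_univ i, ?_⟩
  have := mul_pos (ha i) (mul_self_pos.mpr hi)
  simpa [mul_assoc] using this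

lemma wGram_apply {r : ℕ} (a : ι → ℤ) (B : Matrix (Fin r) ι ℤ) (k l : Fin r) :
    wGram a B k l = wInner a (B k) (B l) := by
  rw [wGram, mul_apply, wInner_eq_sum]
  simp only [mul_diagonal, transpose_apply]
  exact Finset.sum_congr rfl fun j _ => by ring

lemma wGram_mul {r s : ℕ} (a : ι → ℤ) (T : Matrix (Fin s) (Fin r) ℤ) (B : Matrix (Fin r) ι ℤ) :
    wGram a (T * B) = T * wGram a B * Tᵀ := by
  simp only [wGram, transpose_mul, Matrix.mul_assoc]

lemma det_wGram_mul {r : ℕ} (a : ι → ℤ) (T : Matrix (Fin r) (Fin r) ℤ) (B : Matrix (Fin r) ι ℤ) :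
    (wGram a (T * B)).det = T.det ^ 2 * (wGram a B).det := by
  rw [wGram_mul, det_mul, det_mul, det_transpose]; ring

end WeightedForm

section Unimodular

lemma transvection_mulVec {n : Type*} [Fintype n] [DecidableEq n] {i j : n} (hij : i ≠ j)
    (c : ℤ) (z : n → ℤ) :
    transvection i j c *ᵥ z = Function.update z i (z i + c * z j) := by
  ext k
  rcases eq_or_ne k i with rfl | hk
  · simp [transvection, add_mulVec, single_mulVec]
  · simp [transvection, add_mulVec, single_mulVec, hk]

lemma swap_permMatrix_mulVec_eq_single {n : ℕ} {z : Fin (n + 1) → ℤ} {i₀ : Fin (n + 1)}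
    (hz : ∀ k, k ≠ i₀ → z k = 0) :
    (Equiv.swap 0 i₀).permMatrix ℤ *ᵥ z = Pi.single 0 (z i₀) := by
  ext k
  rw [permMatrix_mulVec, Function.comp_apply]
  rcases eq_or_ne k 0 with rfl | hk
  · simp
  · rw [Pi.single_eq_of_ne hk]
    rcases eq_or_ne k i₀ with rfl | hki
    · simpa using hz 0 hk.symm
    · rw [Equiv.swap_apply_of_ne_of_ne hk hki, hz k hki]

/-- Euclid's algorithm, run with elementary row operations. -/
lemma exists_isUnit_det_mulVec_eq_single {n : ℕ} (z : Fin (n + 1) → ℤ) :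
    ∃ (U : Matrix (Fin (n + 1)) (Fin (n + 1)) ℤ) (c : ℤ),
      IsUnit U.det ∧ U *ᵥ z = Pi.single 0 c := by
  induction h : ∑ i, (z i).natAbs using Nat.strong_induction_on generalizing z with
  | _ s ih =>
  by_cases hpair : ∃ i j, i ≠ j ∧ z j ≠ 0 ∧ (z j).natAbs ≤ (z i).natAbs
  · obtain ⟨i, j, hij, hj, hle⟩ := hpair
    set z' := transvection i j (-(z i / z j)) *ᵥ z
    have hz'i : z' i = z i % z j := by
      simp only [z', transvection_mulVec hij, Function.update_self]
      linarith [Int.emod_add_mul_ediv (z i) (z j)]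
    have hlt : ∑ k, (z' k).natAbs < s := by
      have hmod : (z i % z j).natAbs < (z j).natAbs := by
        have := Int.emod_lt (z i) hj
        have := Int.emod_nonneg (z i) hj
        omega
      rw [← h, ← Finset.add_sum_erase _ _ (Finset.mem_univ i),
        ← Finset.add_sum_erase _ _ (Finset.mem_univ i), hz'i]
      refine Nat.add_lt_add_of_lt_of_le (by omega) (Finset.sum_le_sum fun k hk => ?_)
      simp [z', transvection_mulVec hij, Finset.ne_of_mem_erase hk]
    obtain ⟨U, c, hU, hUz⟩ := ih _ hlt z' rfl
    refine ⟨U * transvection i j (-(z i / z j)), c, ?_, ?_⟩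
    · rwa [det_mul, det_transvection_of_ne _ _ hij, mul_one]
    · rw [← mulVec_mulVec, hUz]
  · push Not at hpair
    obtain ⟨i₀, hi₀⟩ : ∃ i₀, ∀ k, k ≠ i₀ → z k = 0 := by
      by_cases hz : ∃ i₀, z i₀ ≠ 0
      · obtain ⟨i₀, hi₀⟩ := hz
        refine ⟨i₀, fun k hk => by_contra fun hzk => ?_⟩
        rcases le_total (z k).natAbs (z i₀).natAbs with hle | hle
        · exact (hpair i₀ k hk.symm hzk).not_ge hle
        · exact (hpair k i₀ hk hi₀).not_ge hle
      · push Not at hz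
        exact ⟨0, fun k _ => hz k⟩
    exact ⟨_, z i₀, by simp, swap_permMatrix_mulVec_eq_single hi₀⟩

lemma exists_isUnit_det_mulVec_eq_single_one {n : ℕ} {z : Fin (n + 1) → ℤ}
    (hz : Finset.univ.gcd z = 1) :
    ∃ U : Matrix (Fin (n + 1)) (Fin (n + 1)) ℤ, IsUnit U.det ∧ U *ᵥ z = Pi.single 0 1 := by
  obtain ⟨U, c, hU, hUz⟩ := exists_isUnit_det_mulVec_eq_single z
  have hzc : z = U⁻¹ *ᵥ Pi.single 0 c := by
    rw [← hUz, mulVec_mulVec, nonsing_inv_mul _ hU, one_mulVec]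
  have hc : IsUnit c := isUnit_of_dvd_one <| hz ▸ Finset.dvd_gcd fun i _ => by
    rw [hzc]; simp
  rcases Int.isUnit_iff.mp hc with rfl | rfl
  · exact ⟨U, hU, hUz⟩
  · refine ⟨-U, by rw [det_neg]; exact (isUnit_neg_one.pow _).mul hU, ?_⟩
    rw [neg_mulVec, hUz, ← Pi.single_neg, neg_neg]

lemma inv_apply_zero_of_mulVec_eq_single {n : ℕ} {V : Matrix (Fin (n + 1)) (Fin (n + 1)) ℤ}
    (hV : IsUnit V.det) {m : Fin (n + 1) → ℤ} (hm : V *ᵥ m = Pi.single 0 1) (i : Fin (n + 1)) :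
    V⁻¹ i 0 = m i := by
  have := congrFun (congrArg (V⁻¹ *ᵥ ·) hm) i
  rw [mulVec_mulVec, nonsing_inv_mul _ hV, one_mulVec] at this
  simpa using this.symm

lemma exists_isUnit_det_row_zero_eq {n : ℕ} {z : Fin (n + 1) → ℤ}
    (hz : Finset.univ.gcd z = 1) :
    ∃ W : Matrix (Fin (n + 1)) (Fin (n + 1)) ℤ, IsUnit W.det ∧ W 0 = z := by
  obtain ⟨U, hU, hUz⟩ := exists_isUnit_det_mulVec_eq_single_one hz
  exact ⟨U⁻¹ᵀ, by rw [det_transpose]; exact isUnit_nonsing_inv_det U hU,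
    funext (inv_apply_zero_of_mulVec_eq_single hU hUz)⟩

end Unimodular

lemma mul_apply_eq_vecMul {l m n : Type*} [Fintype m] (T : Matrix l m ℤ) (B : Matrix m n ℤ)
    (k : l) : (T * B) k = T k ᵥ* B := rfl

lemma linearIndependent_rows_mul {m n : Type*} [Fintype m] [DecidableEq m]
    {T : Matrix m m ℤ} (hT : IsUnit T.det) {B : Matrix m n ℤ} (hB : LinearIndependent ℤ B.row) :
    LinearIndependent ℤ (T * B).row := by
  rw [← vecMul_injective_iff] at hB ⊢
  have hT' := vecMul_injective_of_isUnit ((isUnit_iff_isUnit_det T).mpr hT)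
  simp only [← vecMul_vecMul]
  exact hB.comp hT'

lemma row_ne_zero_of_isUnit_det {m : Type*} [Fintype m] [DecidableEq m] {T : Matrix m m ℤ}
    (hT : IsUnit T.det) (i : m) : T i ≠ 0 := fun h =>
  hT.ne_zero (det_eq_zero_of_row_eq_zero i fun j => congrFun h j)

section Bordered

variable {r : ℕ}

/-- The block matrix `(1 0; ρ T)`. -/
def bordered (ρ : Fin r → ℤ) (T : Matrix (Fin r) (Fin r) ℤ) :
    Matrix (Fin (r + 1)) (Fin (r + 1)) ℤ :=
  of <| vecCons (Pi.single 0 1) fun k => vecCons (ρ k) (T k)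

lemma det_eq_mul_det_submatrix_succ (M : Matrix (Fin (r + 1)) (Fin (r + 1)) ℤ)
    (h : ∀ j : Fin r, M 0 j.succ = 0) : M.det = M 0 0 * (M.submatrix Fin.succ Fin.succ).det := by
  simp [det_succ_row_zero M, Fin.sum_univ_succ, h]

lemma det_bordered (ρ : Fin r → ℤ) (T : Matrix (Fin r) (Fin r) ℤ) :
    (bordered ρ T).det = T.det := by
  rw [det_eq_mul_det_submatrix_succ _ fun j => by simp [bordered]]
  have : (bordered ρ T).submatrix Fin.succ Fin.succ = T := by ext k l; simp [bordered]
  rw [this, show bordered ρ T 0 0 = 1 by simp [bordered], one_mul]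

variable {ι : Type*}

lemma bordered_mul_zero (ρ : Fin r → ℤ) (T : Matrix (Fin r) (Fin r) ℤ)
    (B : Matrix (Fin (r + 1)) ι ℤ) : (bordered ρ T * B) 0 = B 0 := by
  ext j; simp [bordered, mul_apply, Pi.single_apply]

lemma bordered_mul_succ (ρ : Fin r → ℤ) (T : Matrix (Fin r) (Fin r) ℤ)
    (B : Matrix (Fin (r + 1)) ι ℤ) (k : Fin r) :
    (bordered ρ T * B) k.succ = ρ k • B 0 + (T * B.submatrix Fin.succ id) k := by
  ext j; simp [bordered, mul_apply, Fin.sum_univ_succ]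

end Bordered

section Projection

variable {ι : Type*} [Fintype ι] [DecidableEq ι] (a : ι → ℤ) {r : ℕ}

lemma wGram_submatrix {s : ℕ} (B : Matrix (Fin r) ι ℤ) (f : Fin s → Fin r) :
    (wGram a B).submatrix f f = wGram a (B.submatrix f id) := by
  ext k l
  rw [submatrix_apply, wGram_apply, wGram_apply]
  rfl

/-- `‖b‖²` times the projection orthogonal to `b`; the factor `‖b‖²` keeps it integral. -/
def wProj (b : ι → ℤ) : (ι → ℤ) →ₗ[ℤ] ι → ℤ where
  toFun x := wNormSq a b • x - wInner a x b • b
  map_add' x y := by simp only [wInner_add_left, smul_add, add_smul]; abel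
  map_smul' c x := by
    simp only [wInner_smul_left, smul_sub, smul_smul, RingHom.id_apply, mul_comm]

lemma wProj_apply (b x : ι → ℤ) : wProj a b x = wNormSq a b • x - wInner a x b • b := rfl

lemma wProj_self (b : ι → ℤ) : wProj a b b = 0 := sub_eq_zero.mpr rfl

lemma wInner_wProj (b x : ι → ℤ) : wInner a (wProj a b x) b = 0 := by
  simp only [wProj_apply, wInner_sub_left, wInner_smul_left, wNormSq]; ring

def projRows (B : Matrix (Fin (r + 1)) ι ℤ) : Matrix (Fin r) ι ℤ :=
  fun k => wProj a (B 0) (B k.succ)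

lemma projRows_eq_submatrix (B : Matrix (Fin (r + 1)) ι ℤ) :
    projRows a B = (bordered (fun k => -wInner a (B k.succ) (B 0)) (wNormSq a (B 0) • 1) *
      B).submatrix Fin.succ id := by
  ext k j
  rw [submatrix_apply, bordered_mul_succ, smul_mul, Matrix.one_mul]
  simp only [projRows, wProj_apply, Pi.add_apply, Pi.sub_apply, Pi.smul_apply, Matrix.smul_apply,
    submatrix_apply, id, smul_eq_mul]
  ring

lemma det_wGram_projRows (B : Matrix (Fin (r + 1)) ι ℤ) :
    wNormSq a (B 0) * (wGram a (projRows a B)).det =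
      wNormSq a (B 0) ^ (2 * r) * (wGram a B).det := by
  set E := bordered (fun k => -wInner a (B k.succ) (B 0)) (wNormSq a (B 0) • 1)
  have hE : E.det = wNormSq a (B 0) ^ r := by
    simp only [E, det_bordered, det_smul, det_one, Fintype.card_fin, mul_one]
  have hrow : ∀ k, (E * B) k.succ = projRows a B k := fun k => by
    rw [projRows_eq_submatrix]; rfl
  have h0 : ∀ k : Fin r, wGram a (E * B) 0 k.succ = 0 := fun k => by
    rw [wGram_apply, bordered_mul_zero, wInner_comm, hrow, projRows, wInner_wProj]
  have h00 : wGram a (E * B) 0 0 = wNormSq a (B 0) := by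
    rw [wGram_apply, bordered_mul_zero]; rfl
  have := det_eq_mul_det_submatrix_succ _ h0
  rw [h00, wGram_submatrix, ← projRows_eq_submatrix, det_wGram_mul, hE] at this
  rw [← this, ← pow_mul, mul_comm r 2]

lemma projRows_bordered_mul (ρ : Fin r → ℤ) (T : Matrix (Fin r) (Fin r) ℤ)
    (B : Matrix (Fin (r + 1)) ι ℤ) :
    projRows a (bordered ρ T * B) = T * projRows a B := by
  funext k
  rw [projRows, bordered_mul_zero, bordered_mul_succ, map_add, map_smul, wProj_self, smul_zero,
    zero_add, mul_apply_eq_vecMul, mul_apply_eq_vecMul, vecMul_eq_sum, vecMul_eq_sum, map_sum]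
  simp only [map_smul, projRows]
  rfl

lemma linearIndependent_projRows {B : Matrix (Fin (r + 1)) ι ℤ} (hB : LinearIndependent ℤ B.row)
    (hα : wNormSq a (B 0) ≠ 0) : LinearIndependent ℤ (projRows a B).row := by
  rw [Fintype.linearIndependent_iff] at hB ⊢
  intro g hg k
  have hsum : ∑ k, g k • projRows a B k = ∑ i, (vecCons (-∑ k, g k * wInner a (B k.succ) (B 0))
      (fun k => wNormSq a (B 0) * g k) i) • B i := by
    simp only [Fin.sum_univ_succ, cons_val_zero, cons_val_succ, projRows, wProj_apply, smul_sub,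
      Finset.sum_sub_distrib, smul_smul, Finset.sum_smul, neg_smul]
    simp only [mul_comm]
    abel
  have := hB _ (hsum ▸ hg) k.succ
  simpa [hα] using this

lemma wNormSq_wProj (b x : ι → ℤ) :
    wNormSq a (wProj a b x) = wNormSq a b ^ 2 * wNormSq a x - wNormSq a b * wInner a x b ^ 2 := by
  rw [wProj_apply, wNormSq_smul_sub_smul]; ring

lemma three_mul_sq_mul_le_wNormSq_wProj {b x : ι → ℤ} (hb : 0 < wNormSq a b)
    (hbx : wNormSq a b ≤ wNormSq a x) (hsize : 2 * |wInner a x b| ≤ wNormSq a b) :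
    3 * wNormSq a b ^ 2 * wNormSq a x ≤ 4 * wNormSq a (wProj a b x) := by
  rw [wNormSq_wProj]
  have : 4 * wInner a x b ^ 2 ≤ wNormSq a b ^ 2 := by
    nlinarith [sq_abs (wInner a x b), abs_nonneg (wInner a x b)]
  nlinarith [mul_le_mul_of_nonneg_left this hb.le]

end Projection

section Reduction

variable {ι : Type*} [Fintype ι] [DecidableEq ι] {a : ι → ℤ}

lemma exists_two_mul_abs_add_mul_le (x : ℤ) {α : ℤ} (hα : 0 < α) :
    ∃ t : ℤ, 2 * |x + t * α| ≤ α := by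
  refine ⟨-((2 * x + α) / (2 * α)), ?_⟩
  have h := Int.emod_add_mul_ediv (2 * x + α) (2 * α)
  have h1 := Int.emod_nonneg (2 * x + α) (by omega : 2 * α ≠ 0)
  have h2 := Int.emod_lt_of_pos (2 * x + α) (by omega : 0 < 2 * α)
  rcases abs_cases (x + -((2 * x + α) / (2 * α)) * α) with ⟨h3, _⟩ | ⟨h3, _⟩ <;> linarith

lemma exists_gcd_eq_one_forall_wNormSq_le (ha : ∀ j, 0 < a j) {r : ℕ}
    (B : Matrix (Fin (r + 1)) ι ℤ) :
    ∃ z : Fin (r + 1) → ℤ, Finset.univ.gcd z = 1 ∧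
      ∀ y, y ≠ 0 → wNormSq a (z ᵥ* B) ≤ wNormSq a (y ᵥ* B) := by
  classical
  have hex : ∃ n : ℕ, ∃ y : Fin (r + 1) → ℤ, y ≠ 0 ∧ (wNormSq a (y ᵥ* B)).toNat = n :=
    ⟨_, Pi.single 0 1, by simp, rfl⟩
  obtain ⟨y₀, hy₀, hy₀n⟩ := Nat.find_spec hex
  obtain ⟨z, hy₀z, hz⟩ := Finset.extract_gcd y₀ Finset.univ_nonempty
  set g := Finset.univ.gcd y₀
  have hg : g ≠ 0 := fun h =>
    hy₀ (funext fun i => Finset.gcd_eq_zero_iff.mp h i (Finset.mem_univ i))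
  have hzy₀ : wNormSq a (z ᵥ* B) ≤ wNormSq a (y₀ ᵥ* B) := by
    have : y₀ = g • z := funext fun i => hy₀z i (Finset.mem_univ i)
    rw [this, smul_vecMul, wNormSq_smul]
    have : 1 ≤ g ^ 2 := by nlinarith [Int.one_le_abs hg, sq_abs g]
    nlinarith [wNormSq_nonneg ha (z ᵥ* B)]
  refine ⟨z, hz, fun y hy => hzy₀.trans ?_⟩
  have := Nat.find_min' hex ⟨y, hy, rfl⟩
  have := wNormSq_nonneg ha (y ᵥ* B)
  omega

lemma exists_two_mul_abs_wInner_bordered_mul_le {r : ℕ} (B : Matrix (Fin (r + 1)) ι ℤ)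
    (hα : 0 < wNormSq a (B 0)) (T : Matrix (Fin r) (Fin r) ℤ) :
    ∃ ρ : Fin r → ℤ, ∀ k : Fin r,
      2 * |wInner a ((bordered ρ T * B) k.succ) (B 0)| ≤ wNormSq a (B 0) := by
  choose ρ hρ using fun k =>
    exists_two_mul_abs_add_mul_le (wInner a ((T * B.submatrix Fin.succ id) k) (B 0)) hα
  refine ⟨ρ, fun k => ?_⟩
  rw [bordered_mul_succ, wInner_add_left, wInner_smul_left, add_comm]
  exact hρ k

lemma mul_prod_le_four_pow_mul {r : ℕ} {α D D' : ℤ} {Q P : Fin r → ℤ} (hα : 0 < α)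
    (hQ : ∀ k, 0 ≤ Q k) (hQP : ∀ k, 3 * α ^ 2 * Q k ≤ 4 * P k)
    (hP : ∏ k, P k ≤ 4 ^ (r * r) * D') (hD : α * D' = α ^ (2 * r) * D) :
    α * ∏ k, Q k ≤ 4 ^ ((r + 1) * (r + 1)) * D := by
  have hQ' : 0 ≤ α * ∏ k, Q k := mul_nonneg hα.le (Finset.prod_nonneg fun k _ => hQ k)
  have key : α ^ (2 * r) * (3 ^ r * (α * ∏ k, Q k)) ≤ α ^ (2 * r) * (4 ^ (r * r + r) * D) :=
    calc α ^ (2 * r) * (3 ^ r * (α * ∏ k, Q k)) = α * ∏ k, (3 * α ^ 2 * Q k) := by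
          rw [Finset.prod_mul_distrib, Finset.prod_const, Finset.card_fin, mul_pow, ← pow_mul]
          ring
      _ ≤ α * ∏ k, (4 * P k) := mul_le_mul_of_nonneg_left
          (Finset.prod_le_prod (fun k _ => by have := hQ k; positivity) fun k _ => hQP k) hα.le
      _ = 4 ^ r * (α * ∏ k, P k) := by
          rw [Finset.prod_mul_distrib, Finset.prod_const, Finset.card_fin]; ring
      _ ≤ 4 ^ r * (α * (4 ^ (r * r) * D')) := by gcongr
      _ = α ^ (2 * r) * (4 ^ (r * r + r) * D) := by
          rw [pow_add]; linear_combination (4 ^ r * 4 ^ (r * r)) * hD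
  have h := le_of_mul_le_mul_left key (pow_pos hα _)
  have hD0 : 0 ≤ D := nonneg_of_mul_nonneg_right
    (le_trans (mul_nonneg (by positivity) hQ') h) (by positivity)
  calc α * ∏ k, Q k ≤ 3 ^ r * (α * ∏ k, Q k) :=
        le_mul_of_one_le_left hQ' (one_le_pow₀ (by norm_num))
    _ ≤ 4 ^ (r * r + r) * D := h
    _ ≤ 4 ^ ((r + 1) * (r + 1)) * D := by
        gcongr
        · norm_num
        · nlinarith

/-- Take a shortest lattice vector `b`, complete it to a basis, reduce the lattice projected
orthogonally to `b` by induction, and size-reduce the lifted basis against `b`. -/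
theorem exists_isUnit_det_prod_wNormSq_le (ha : ∀ j, 0 < a j) :
    ∀ {r : ℕ} (B : Matrix (Fin r) ι ℤ), LinearIndependent ℤ B.row →
      ∃ T : Matrix (Fin r) (Fin r) ℤ, IsUnit T.det ∧
        ∏ k, wNormSq a ((T * B) k) ≤ 4 ^ (r * r) * (wGram a B).det
  | 0, B, _ => ⟨1, by simp, by simp⟩
  | r + 1, B, hB => by
    obtain ⟨z, hz, hmin⟩ := exists_gcd_eq_one_forall_wNormSq_le ha B
    obtain ⟨W, hW, hW0⟩ := exists_isUnit_det_row_zero_eq hz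
    set B' := W * B
    have hB' := linearIndependent_rows_mul hW hB
    have hα : 0 < wNormSq a (B' 0) := wNormSq_pos ha (hB'.ne_zero 0)
    obtain ⟨T', hT', hT'B⟩ := exists_isUnit_det_prod_wNormSq_le ha (projRows a B')
      (linearIndependent_projRows a hB' hα.ne')
    obtain ⟨ρ, hρ⟩ := exists_two_mul_abs_wInner_bordered_mul_le B' hα T'
    have hT : IsUnit (bordered ρ T' * W).det := by rw [det_mul, det_bordered]; exact hT'.mul hW
    refine ⟨bordered ρ T' * W, hT, ?_⟩
    rw [Matrix.mul_assoc, Fin.prod_univ_succ, bordered_mul_zero]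
    refine mul_prod_le_four_pow_mul hα (fun k => wNormSq_nonneg ha _) (fun k => ?_) hT'B ?_
    · have hshort : wNormSq a (B' 0) ≤ wNormSq a ((bordered ρ T' * B') k.succ) := by
        rw [show B' 0 = z ᵥ* B from hW0 ▸ mul_apply_eq_vecMul W B 0, ← Matrix.mul_assoc,
          mul_apply_eq_vecMul]
        exact hmin _ (row_ne_zero_of_isUnit_det hT _)
      rw [← projRows_bordered_mul]
      have := three_mul_sq_mul_le_wNormSq_wProj a hα hshort (hρ k)
      rwa [projRows, bordered_mul_zero]
    · rw [det_wGram_projRows, det_wGram_mul, Int.isUnit_sq hW, one_mul]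

end Reduction

section Covolume

variable {n : ℕ}

lemma det_wGram_vecCons {ι : Type*} [Fintype ι] [DecidableEq ι] (a y : ι → ℤ)
    (K : Matrix (Fin n) ι ℤ) (hK : ∀ k, wInner a (K k) y = 0) :
    (wGram a (of (vecCons y K))).det = wNormSq a y * (wGram a K).det := by
  rw [det_eq_mul_det_submatrix_succ _ fun k => by
    rw [wGram_apply, wInner_comm]; exact hK k, wGram_submatrix]
  have hsub : (of (vecCons y K)).submatrix Fin.succ id = K := by ext k j; rfl
  rw [hsub, wGram_apply]
  rfl

lemma sq_det_vecCons_eq {V : Matrix (Fin (n + 1)) (Fin (n + 1)) ℤ} (hV : IsUnit V.det)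
    {m : Fin (n + 1) → ℤ} (hm : V *ᵥ m = Pi.single 0 1) (y : Fin (n + 1) → ℤ) :
    (of (vecCons y (V.submatrix Fin.succ id))).det ^ 2 = (y ⬝ᵥ m) ^ 2 := by
  set Y := of (vecCons y (V.submatrix Fin.succ id))
  have hsucc : ∀ (k : Fin n) l,
      (Y * V⁻¹) k.succ l = (1 : Matrix (Fin (n + 1)) (Fin (n + 1)) ℤ) k.succ l :=
    fun k l => by rw [← mul_nonsing_inv _ hV, mul_apply, mul_apply]; rfl
  have hdet : (Y * V⁻¹).det = y ⬝ᵥ m := by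
    rw [← det_transpose, det_eq_mul_det_submatrix_succ _ fun l => by
      rw [transpose_apply, hsucc, one_apply_ne (Fin.succ_ne_zero l)]]
    have hsub : (Y * V⁻¹)ᵀ.submatrix Fin.succ Fin.succ = 1 := by
      ext k l
      rw [submatrix_apply, transpose_apply, hsucc, one_apply, one_apply]
      simp only [Fin.succ_inj, eq_comm]
    rw [hsub, det_one, mul_one, transpose_apply, mul_apply]
    simp only [inv_apply_zero_of_mulVec_eq_single hV hm]
    rfl
  have hinv := Int.isUnit_sq (isUnit_nonsing_inv_det V hV)
  rw [← hdet, det_mul, mul_pow, hinv, mul_one]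

lemma det_wGram_submatrix_succ {a : Fin (n + 1) → ℤ} (ha : ∀ j, 0 < a j)
    {V : Matrix (Fin (n + 1)) (Fin (n + 1)) ℤ} (hV : IsUnit V.det) {m : Fin (n + 1) → ℤ}
    (hm : V *ᵥ m = Pi.single 0 1) :
    (wGram a (V.submatrix Fin.succ id)).det = ∑ j, m j ^ 2 * ∏ k ∈ Finset.univ.erase j, a k := by
  set P := ∏ j, a j
  set S := ∑ j, m j ^ 2 * ∏ k ∈ Finset.univ.erase j, a k
  set ν : Fin (n + 1) → ℤ := fun j => m j * ∏ k ∈ Finset.univ.erase j, a k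
  have hinner : ∀ x, wInner a x ν = P * (x ⬝ᵥ m) := fun x => by
    rw [wInner_eq_sum, dotProduct, Finset.mul_sum]
    refine Finset.sum_congr rfl fun j _ => ?_
    simp only [ν, P]
    rw [← Finset.mul_prod_erase _ _ (Finset.mem_univ j)]
    ring
  have hK : ∀ k, wInner a (V.submatrix Fin.succ id k) ν = 0 := fun k => by
    rw [hinner, ← mul_zero P]
    congr 1
    have := congrFun hm k.succ
    rwa [Pi.single_eq_of_ne (Fin.succ_ne_zero k)] at this
  have hνm : ν ⬝ᵥ m = S := Finset.sum_congr rfl fun j _ => by ring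
  have hgram := det_wGram_vecCons a ν _ hK
  rw [wGram, det_mul, det_mul, det_transpose, det_diagonal, mul_right_comm, ← sq,
    sq_det_vecCons_eq hV hm, wNormSq, hinner, hνm] at hgram
  have hm0 : m ≠ 0 := by rintro rfl; simpa using congrFun hm 0
  obtain ⟨i, hi⟩ := Function.ne_iff.mp hm0
  have hprod : ∀ j, 0 < ∏ k ∈ Finset.univ.erase j, a k := fun j =>
    Finset.prod_pos fun k _ => ha k
  have hS : 0 < S := Finset.sum_pos' (fun j _ => by have := hprod j; positivity)
    ⟨i, Finset.mem_univ i, mul_pos (sq_pos_of_ne_zero hi) (hprod i)⟩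
  have hP : 0 < P := Finset.prod_pos fun k _ => ha k
  exact (mul_left_cancel₀ (mul_pos hP hS).ne' (by rw [← hgram]; ring)).symm

lemma sum_sq_mul_prod_erase_le {ι : Type*} [Fintype ι] [DecidableEq ι] {a m : ι → ℤ}
    (ha : ∀ j, 0 < a j) {c : ℤ} (hm : ∀ j, m j ^ 2 ≤ c * a j) :
    ∑ j, m j ^ 2 * ∏ k ∈ Finset.univ.erase j, a k ≤ Fintype.card ι * c * ∏ j, a j := by
  calc ∑ j, m j ^ 2 * ∏ k ∈ Finset.univ.erase j, a k
      ≤ ∑ j, c * a j * ∏ k ∈ Finset.univ.erase j, a k :=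
        Finset.sum_le_sum fun j _ =>
          mul_le_mul_of_nonneg_right (hm j) (Finset.prod_nonneg fun k _ => (ha k).le)
    _ = Fintype.card ι * c * ∏ j, a j := by
        simp only [mul_assoc, Finset.mul_prod_erase _ _ (Finset.mem_univ _), Finset.sum_const,
          Finset.card_univ, nsmul_eq_mul]

end Covolume

section Progression

variable {G : Type*} [AddCommGroup G] {d n : ℕ}

def genProgression (v : Fin d → G) (N : Fin d → ℕ) : Set G :=
  {x | ∃ m : Fin d → ℤ, (∀ j, |m j| ≤ N j) ∧ x = ∑ j, m j • v j}

def IsProperGenProgression (v : Fin d → G) (N : Fin d → ℕ) : Prop :=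
  ∀ m m' : Fin d → ℤ, (∀ j, |m j| ≤ N j) → (∀ j, |m' j| ≤ N j) →
    ∑ j, m j • v j = ∑ j, m' j • v j → m = m'

def progressionVolume (N : Fin d → ℕ) : ℕ := ∏ j, (2 * N j + 1)

lemma sum_mulVec_smul {ι κ : Type*} [Fintype ι] [Fintype κ] (A : Matrix ι κ ℤ) (c : κ → ℤ)
    (v : ι → G) : ∑ j, (A *ᵥ c) j • v j = ∑ l, c l • ∑ j, A j l • v j := by
  simp only [mulVec, dotProduct, Finset.sum_smul, Finset.smul_sum, smul_smul, mul_comm]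
  exact Finset.sum_comm

lemma exists_sum_smul_eq_sum_mulVec_smul {v : Fin (n + 1) → G}
    {V : Matrix (Fin (n + 1)) (Fin (n + 1)) ℤ} (hV : IsUnit V.det) {m : Fin (n + 1) → ℤ}
    (hm : V *ᵥ m = Pi.single 0 1) (hrel : ∑ j, m j • v j = 0)
    {T : Matrix (Fin n) (Fin n) ℤ} (hT : IsUnit T.det) :
    ∃ w : Fin n → G, ∀ c : Fin (n + 1) → ℤ,
      ∑ j, c j • v j = ∑ k, ((T * V.submatrix Fin.succ id) *ᵥ c) k • w k := by
  set u : Fin (n + 1) → G := fun l => ∑ j, V⁻¹ j l • v j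
  have hu0 : u 0 = 0 := by simpa only [u, inv_apply_zero_of_mulVec_eq_single hV hm] using hrel
  refine ⟨fun k => ∑ l, T⁻¹ l k • u l.succ, fun c => ?_⟩
  calc ∑ j, c j • v j = ∑ j, (V⁻¹ *ᵥ (V *ᵥ c)) j • v j := by
        rw [mulVec_mulVec, nonsing_inv_mul _ hV, one_mulVec]
    _ = ∑ l, (V.submatrix Fin.succ id *ᵥ c) l • u l.succ := by
        rw [sum_mulVec_smul]
        change ∑ l, (V *ᵥ c) l • u l = _
        rw [Fin.sum_univ_succ, hu0, smul_zero, zero_add]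
        rfl
    _ = ∑ l, (T⁻¹ *ᵥ ((T * V.submatrix Fin.succ id) *ᵥ c)) l • u l.succ := by
        rw [mulVec_mulVec, ← Matrix.mul_assoc, nonsing_inv_mul _ hT, Matrix.one_mul]
    _ = _ := sum_mulVec_smul _ _ _

lemma genProgression_subset_of_sum_smul_eq {v : Fin d → G} {w : Fin n → G}
    (L : Matrix (Fin n) (Fin d) ℤ) (hL : ∀ c, ∑ j, c j • v j = ∑ k, (L *ᵥ c) k • w k)
    (N : Fin d → ℕ) :
    genProgression v N ⊆ genProgression w fun k => ∑ j, N j * (L k j).natAbs := by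
  rintro x ⟨c, hc, rfl⟩
  refine ⟨L *ᵥ c, fun k => ?_, hL c⟩
  calc |(L *ᵥ c) k| = |∑ j, L k j * c j| := rfl
    _ ≤ ∑ j, |L k j * c j| := Finset.abs_sum_le_sum_abs _ _
    _ ≤ ∑ j, (N j : ℤ) * |L k j| := Finset.sum_le_sum fun j _ => by
        rw [abs_mul, mul_comm]; exact mul_le_mul_of_nonneg_right (hc j) (abs_nonneg _)
    _ = ((∑ j, N j * (L k j).natAbs : ℕ) : ℤ) := by push_cast [Int.natCast_natAbs]; rfl

lemma sq_sum_mul_natAbs_le (N : Fin d → ℕ) (x : Fin d → ℤ) :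
    ((∑ j, N j * (x j).natAbs : ℕ) : ℤ) ^ 2 ≤ d * wNormSq (fun j => (N j : ℤ) ^ 2) x := by
  have := Finset.sum_mul_sq_le_sq_mul_sq Finset.univ (fun _ => (1 : ℤ)) fun j => N j * |x j|
  simp only [one_mul, one_pow, Finset.sum_const, Finset.card_univ, Fintype.card_fin,
    nsmul_eq_mul, mul_one, mul_pow, sq_abs] at this
  push_cast [Int.natCast_natAbs]
  rw [wNormSq, wInner_eq_sum]
  exact this.trans_eq (congrArg _ (Finset.sum_congr rfl fun j _ => by ring))

lemma sq_progressionVolume_le {M : Fin n → ℕ} (hM : ∀ k, 0 < M k) {Q : Fin n → ℤ}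
    (hMQ : ∀ k, (M k : ℤ) ^ 2 ≤ d * Q k) :
    (progressionVolume M : ℤ) ^ 2 ≤ (9 * d) ^ n * ∏ k, Q k := by
  calc (progressionVolume M : ℤ) ^ 2 = ∏ k, (2 * (M k : ℤ) + 1) ^ 2 := by
        push_cast [progressionVolume, Finset.prod_pow]; rfl
    _ ≤ ∏ k, (9 * d * Q k) := Finset.prod_le_prod (fun k _ => by positivity) fun k _ => by
        have h1 : (1 : ℤ) ≤ M k := by exact_mod_cast hM k
        nlinarith [hMQ k]
    _ = (9 * d) ^ n * ∏ k, Q k := by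
        rw [Finset.prod_mul_distrib, Finset.prod_const, Finset.card_fin]

/-- Its square bounds the volume lost in one step: `(9 (n+1))ⁿ` from rounding and Cauchy–Schwarz,
`4^(n²)` from the reduced basis and `4 (n+1)` from the covolume of the relation lattice. -/
def reductionFactor (n : ℕ) : ℕ := 3 ^ n * 2 ^ (n * n + 1) * (n + 1) ^ (n + 1)

lemma le_sq_reductionFactor (n : ℕ) :
    (9 * ((n : ℤ) + 1)) ^ n * 4 ^ (n * n) * (4 * ((n : ℤ) + 1)) ≤ (reductionFactor n : ℤ) ^ 2 := by
  have hF : (reductionFactor n : ℤ) ^ 2 =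
      9 ^ n * 4 ^ (n * n + 1) * ((n : ℤ) + 1) ^ (2 * n + 2) := by
    push_cast [reductionFactor]
    rw [mul_pow, mul_pow, ← pow_mul, ← pow_mul, ← pow_mul, mul_comm n 2, pow_mul, mul_comm _ 2,
      pow_mul, show (n + 1) * 2 = 2 * n + 2 by ring]
    norm_num
  have h : ((n : ℤ) + 1) ^ (n + 1) ≤ ((n : ℤ) + 1) ^ (2 * n + 2) :=
    pow_le_pow_right₀ (by omega) (by omega)
  calc (9 * ((n : ℤ) + 1)) ^ n * 4 ^ (n * n) * (4 * ((n : ℤ) + 1))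
      = 9 ^ n * 4 ^ (n * n + 1) * ((n : ℤ) + 1) ^ (n + 1) := by rw [mul_pow]; ring
    _ ≤ _ := by rw [hF]; gcongr

lemma progressionVolume_le_reductionFactor_mul {N : Fin (n + 1) → ℕ} {M : Fin n → ℕ}
    (hM : ∀ k, 0 < M k) {Q : Fin n → ℤ}
    (hMQ : ∀ k, (M k : ℤ) ^ 2 ≤ ((n : ℤ) + 1) * Q k)
    (hQ : ∏ k, Q k ≤ 4 ^ (n * n) * (4 * ((n : ℤ) + 1) * ∏ j, (N j : ℤ) ^ 2)) :
    progressionVolume M ≤ reductionFactor n * progressionVolume N := by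
  have hN2 : ∏ j, (N j : ℤ) ^ 2 ≤ (progressionVolume N : ℤ) ^ 2 := by
    push_cast [progressionVolume, ← Finset.prod_pow]
    exact Finset.prod_le_prod (fun j _ => by positivity) fun j _ => by nlinarith
  have hsq : (progressionVolume M : ℤ) ^ 2 ≤
      ((reductionFactor n * progressionVolume N : ℕ) : ℤ) ^ 2 :=
    calc (progressionVolume M : ℤ) ^ 2 ≤ (9 * ((n : ℤ) + 1)) ^ n * ∏ k, Q k :=
          sq_progressionVolume_le hM hMQ
      _ ≤ (9 * ((n : ℤ) + 1)) ^ n * (4 ^ (n * n) * (4 * ((n : ℤ) + 1) * ∏ j, (N j : ℤ) ^ 2)) := by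
          gcongr
      _ = (9 * ((n : ℤ) + 1)) ^ n * 4 ^ (n * n) * (4 * ((n : ℤ) + 1)) *
            ∏ j, (N j : ℤ) ^ 2 := by ring
      _ ≤ (reductionFactor n : ℤ) ^ 2 * (progressionVolume N : ℤ) ^ 2 :=
          mul_le_mul (le_sq_reductionFactor n) hN2 (by positivity) (sq_nonneg _)
      _ = _ := by push_cast; ring
  exact_mod_cast (pow_le_pow_iff_left₀ (by positivity) (by positivity) two_ne_zero).mp hsq

theorem exists_genProgression_superset_of_relation {v : Fin (n + 1) → G}
    {N : Fin (n + 1) → ℕ} (hN : ∀ j, 0 < N j) {m : Fin (n + 1) → ℤ}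
    (hm : Finset.univ.gcd m = 1) (hmN : ∀ j, |m j| ≤ 2 * N j) (hrel : ∑ j, m j • v j = 0) :
    ∃ (w : Fin n → G) (M : Fin n → ℕ), (∀ k, 0 < M k) ∧
      genProgression v N ⊆ genProgression w M ∧
      progressionVolume M ≤ reductionFactor n * progressionVolume N := by
  set a : Fin (n + 1) → ℤ := fun j => (N j : ℤ) ^ 2
  have ha : ∀ j, 0 < a j := fun j => by have := hN j; positivity
  obtain ⟨V, hV, hVm⟩ := exists_isUnit_det_mulVec_eq_single_one hm
  set K := V.submatrix Fin.succ id
  have hK : LinearIndependent ℤ K.row :=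
    (linearIndependent_rows_of_det_ne_zero hV.ne_zero).comp Fin.succ (Fin.succ_injective n)
  obtain ⟨T, hT, hTK⟩ := exists_isUnit_det_prod_wNormSq_le ha K hK
  obtain ⟨w, hw⟩ := exists_sum_smul_eq_sum_mulVec_smul hV hVm hrel hT
  set M : Fin n → ℕ := fun k => ∑ j, N j * ((T * K) k j).natAbs
  have hM : ∀ k, 0 < M k := fun k => by
    obtain ⟨j, hj⟩ := Function.ne_iff.mp ((linearIndependent_rows_mul hT hK).ne_zero k)
    exact Finset.sum_pos' (fun _ _ => Nat.zero_le _)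
      ⟨j, Finset.mem_univ j, Nat.mul_pos (hN j) (Int.natAbs_pos.mpr hj)⟩
  have hcov : (wGram a K).det ≤ 4 * ((n : ℤ) + 1) * ∏ j, a j := by
    have := sum_sq_mul_prod_erase_le ha (c := 4) fun j => by
      show m j ^ 2 ≤ 4 * (N j : ℤ) ^ 2
      nlinarith [sq_abs (m j), abs_nonneg (m j), hmN j]
    rw [det_wGram_submatrix_succ ha hV hVm]
    simp only [Fintype.card_fin, Nat.cast_add, Nat.cast_one] at this
    linarith
  refine ⟨w, M, hM, genProgression_subset_of_sum_smul_eq _ hw N,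
    progressionVolume_le_reductionFactor_mul hM (fun k => ?_) (hTK.trans (by gcongr))⟩
  exact_mod_cast sq_sum_mul_natAbs_le N ((T * K) k)

lemma eq_zero_of_zsmul_eq_zero_of_natAbs_lt {x : G} {g : ℤ} {K : ℕ} (hg : g ≠ 0)
    (hgx : g • x = 0) (hgK : g.natAbs < K) (hord : x ≠ 0 → addOrderOf x = 0 ∨ K ≤ addOrderOf x) :
    x = 0 := by
  by_contra hx
  have hdvd : addOrderOf x ∣ g.natAbs :=
    Int.ofNat_dvd_left.mp (addOrderOf_dvd_iff_zsmul_eq_zero.mpr hgx)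
  rcases hord hx with h | h
  · rw [h, zero_dvd_iff, Int.natAbs_eq_zero] at hdvd
    exact hg hdvd
  · have := Nat.le_of_dvd (Int.natAbs_pos.mpr hg) hdvd
    omega

lemma exists_ne_zero_sum_smul_eq_zero {v : Fin d → G} {N : Fin d → ℕ}
    (hv : ¬IsProperGenProgression v N) :
    ∃ δ : Fin d → ℤ, δ ≠ 0 ∧ (∀ j, |δ j| ≤ 2 * N j) ∧ ∑ j, δ j • v j = 0 := by
  simp only [IsProperGenProgression, not_forall] at hv
  obtain ⟨m₁, m₂, h₁, h₂, hsum, hne⟩ := hv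
  refine ⟨m₁ - m₂, sub_ne_zero.mpr hne, fun j => ?_, ?_⟩
  · have := abs_sub (m₁ j) (m₂ j)
    have := h₁ j
    have := h₂ j
    simp only [Pi.sub_apply]
    linarith
  · simp only [Pi.sub_apply, sub_smul, Finset.sum_sub_distrib, hsum, sub_self]

lemma exists_gcd_eq_one_sum_smul_eq_zero {v : Fin d → G} {N : Fin d → ℕ}
    (hv : ¬IsProperGenProgression v N)
    (hord : ∀ g : G, g ≠ 0 → addOrderOf g = 0 ∨ progressionVolume N ≤ addOrderOf g) :
    ∃ m : Fin d → ℤ, Finset.univ.gcd m = 1 ∧ (∀ j, |m j| ≤ 2 * N j) ∧ ∑ j, m j • v j = 0 := by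
  obtain ⟨δ, hδ0, hδ, hδv⟩ := exists_ne_zero_sum_smul_eq_zero hv
  obtain ⟨j₀, hj₀⟩ := Function.ne_iff.mp hδ0
  obtain ⟨m, hδm, hm⟩ := Finset.extract_gcd δ ⟨j₀, Finset.mem_univ _⟩
  set g := Finset.univ.gcd δ
  have hg : g ≠ 0 := fun h => hj₀ (Finset.gcd_eq_zero_iff.mp h j₀ (Finset.mem_univ _))
  have hδm' : ∀ j, δ j = g * m j := fun j => hδm j (Finset.mem_univ j)
  refine ⟨m, hm, fun j => le_trans ?_ (hδ j), ?_⟩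
  · rw [hδm', abs_mul]
    exact le_mul_of_one_le_left (abs_nonneg _) (Int.one_le_abs hg)
  have hgN : g.natAbs < progressionVolume N := by
    have h1 : g.natAbs ≤ (δ j₀).natAbs :=
      Int.natAbs_le_of_dvd_ne_zero (Finset.gcd_dvd (Finset.mem_univ j₀)) hj₀
    have h2 : ((δ j₀).natAbs : ℤ) ≤ 2 * N j₀ := by rw [Int.natCast_natAbs]; exact hδ j₀
    have h3 := Finset.single_le_prod' (f := fun j => 2 * N j + 1) (fun j _ => by omega)
      (Finset.mem_univ j₀)
    simp only [progressionVolume] at h3 ⊢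
    omega
  refine eq_zero_of_zsmul_eq_zero_of_natAbs_lt hg ?_ hgN (hord _)
  rw [Finset.smul_sum]
  simp_rw [smul_smul, ← hδm']
  exact hδv

lemma pow_mul_reductionFactor_le (hn : 1 ≤ n) :
    n ^ (100 * n ^ 3) * reductionFactor n ≤ (n + 1) ^ (100 * (n + 1) ^ 3) := by
  have h3 : 3 ≤ (n + 1) ^ 2 := by nlinarith
  have hF : reductionFactor n ≤ (n + 1) ^ (2 * n ^ 2 + 3 * n + 3) :=
    calc reductionFactor n
        ≤ ((n + 1) ^ 2) ^ n * ((n + 1) ^ 2) ^ (n * n + 1) * (n + 1) ^ (n + 1) := by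
          unfold reductionFactor
          gcongr; omega
      _ = (n + 1) ^ (2 * n ^ 2 + 3 * n + 3) := by
          rw [← pow_mul, ← pow_mul, ← pow_add, ← pow_add]; ring_nf
  calc n ^ (100 * n ^ 3) * reductionFactor n
      ≤ (n + 1) ^ (100 * n ^ 3) * (n + 1) ^ (2 * n ^ 2 + 3 * n + 3) := by gcongr; omega
    _ = (n + 1) ^ (100 * n ^ 3 + (2 * n ^ 2 + 3 * n + 3)) := (pow_add _ _ _).symm
    _ ≤ (n + 1) ^ (100 * (n + 1) ^ 3) := Nat.pow_le_pow_right (by omega) (by nlinarith)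

lemma pow_mul_progressionVolume_le {M : Fin n → ℕ} {N : Fin (n + 1) → ℕ}
    (h : progressionVolume M ≤ reductionFactor n * progressionVolume N) :
    n ^ (100 * n ^ 3) * progressionVolume M ≤
      (n + 1) ^ (100 * (n + 1) ^ 3) * progressionVolume N := by
  rcases Nat.eq_zero_or_pos n with rfl | hn
  · simp [progressionVolume]
  · calc n ^ (100 * n ^ 3) * progressionVolume M
        ≤ n ^ (100 * n ^ 3) * reductionFactor n * progressionVolume N := by
          rw [mul_assoc]; exact Nat.mul_le_mul_left _ h
      _ ≤ _ := Nat.mul_le_mul_right _ (pow_mul_reductionFactor_le hn)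

theorem exists_isProperGenProgression_superset (d : ℕ) (v : Fin d → G) (N : Fin d → ℕ)
    (hN : ∀ j, 0 < N j)
    (hord : ∀ g : G, g ≠ 0 →
      addOrderOf g = 0 ∨ d ^ (100 * d ^ 3) * progressionVolume N ≤ addOrderOf g) :
    ∃ (d' : ℕ) (w : Fin d' → G) (M : Fin d' → ℕ), d' ≤ d ∧ (∀ j, 0 < M j) ∧
      IsProperGenProgression w M ∧ genProgression v N ⊆ genProgression w M ∧
      progressionVolume M ≤ d ^ (100 * d ^ 3) * progressionVolume N := by
  induction d with
  | zero => exact ⟨0, v, N, le_rfl, hN, fun _ _ _ _ _ => Subsingleton.elim _ _, subset_rfl, by simp⟩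
  | succ n ih =>
    have hpow : 0 < (n + 1) ^ (100 * (n + 1) ^ 3) := by positivity
    by_cases hv : IsProperGenProgression v N
    · exact ⟨n + 1, v, N, le_rfl, hN, hv, subset_rfl, Nat.le_mul_of_pos_left _ hpow⟩
    have hord' : ∀ g : G, g ≠ 0 → addOrderOf g = 0 ∨ progressionVolume N ≤ addOrderOf g :=
      fun g hg => (hord g hg).imp_right (le_trans (Nat.le_mul_of_pos_left _ hpow))
    obtain ⟨m, hm, hmN, hrel⟩ := exists_gcd_eq_one_sum_smul_eq_zero hv hord'
    obtain ⟨w, M, hM, hsub, hvol⟩ := exists_genProgression_superset_of_relation hN hm hmN hrel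
    have hstep := pow_mul_progressionVolume_le hvol
    obtain ⟨d', w', M', hd', hM', hprop, hsub', hvol'⟩ :=
      ih w M hM fun g hg => (hord g hg).imp_right (le_trans hstep)
    exact ⟨d', w', M', hd'.trans n.le_succ, hM', hprop, hsub.trans hsub', hvol'.trans hstep⟩

end Progression

end ProperProgression

/-- Progressions lie inside proper progressions: there is an absolute constant `C₀` such
that any symmetric generalized arithmetic progression `P` of rank `d` in an abelian group
`G` in which every non-zero element has order at least `d^{C₀d³}|P|` (infinite order
allowed) is contained in a proper symmetric progression `Q` of rank at most `d` with
`|Q| ≤ d^{C₀d³}|P|`, where `|·|` denotes the volume `∏ⱼ(2Nⱼ+1)`. -/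
theorem progression_in_proper_progression :
    ∃ C₀ : ℕ, 0 < C₀ ∧
      ∀ (G : Type) [AddCommGroup G] (d : ℕ), 1 ≤ d →
      ∀ (v : Fin d → G) (N : Fin d → ℕ), (∀ j, 0 < N j) →
      (∀ g : G, g ≠ 0 → addOrderOf g = 0 ∨
          d ^ (C₀ * d ^ 3) * ∏ j, (2 * N j + 1) ≤ addOrderOf g) →
      ∃ (d' : ℕ) (w : Fin d' → G) (M : Fin d' → ℕ),
        d' ≤ d ∧ (∀ j, 0 < M j) ∧
        (∀ m m' : Fin d' → ℤ, (∀ j, |m j| ≤ M j) → (∀ j, |m' j| ≤ M j) →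
          ∑ j, m j • w j = ∑ j, m' j • w j → m = m') ∧
        {x : G | ∃ m : Fin d → ℤ, (∀ j, |m j| ≤ N j) ∧ x = ∑ j, m j • v j} ⊆
          {x : G | ∃ m : Fin d' → ℤ, (∀ j, |m j| ≤ M j) ∧ x = ∑ j, m j • w j} ∧
        ∏ j, (2 * M j + 1) ≤ d ^ (C₀ * d ^ 3) * ∏ j, (2 * N j + 1) :=
  ⟨100, by norm_num, fun G _ d _ v N hN hord =>
    ProperProgression.exists_isProperGenProgression_superset d v N hN hord⟩
end
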